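/- arXiv:math/0610162 — 4 statements merged into one kernel-verified Lean document; each statement's English description precedes it below -/
import Mathlib

section
/- Let K be a field and let P1, P2 be polynomials over K(t) (the field of rational functions in one variable t over K). If K is formally real, then for all values of the variables, P1 = 0 and P2 = 0 holds if and only if P1² + t·P2² = 0. -/
/-- Over the rational function field `K(t)` of a formally real field `K`
(i.e. `-1` is not a sum of squares in `K`), for `x, y ∈ K(t)` one has
`x = 0 ∧ y = 0 ↔ x² + t·y² = 0`. -/
theorem stmt1 (K : Type*) [Field K]
    (hfr : ∀ (n : ℕ) (f : Fin n → K), ∑ i, (f i) ^ 2 ≠ -1)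
    (x y : RatFunc K) :
    (x = 0 ∧ y = 0) ↔ x ^ 2 + RatFunc.X * y ^ 2 = 0 := by
  constructor
  · rintro ⟨rfl, rfl⟩; ring
  · intro h
    by_cases hy : y = 0
    · subst hy
      simp at h
      exact ⟨h, rfl⟩
    exfalso
    have hx : x ≠ 0 := by
      rintro rfl
      rw [zero_pow two_ne_zero, zero_add, mul_eq_zero] at h
      rcases h with h | h
      · exact RatFunc.X_ne_zero h
      · exact hy (pow_eq_zero_iff two_ne_zero |>.mp h)
    have hX : (RatFunc.X : RatFunc K) = -(x / y) ^ 2 := by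
      field_simp
      linear_combination h
    have := congrArg RatFunc.intDegree hX
    rw [RatFunc.intDegree_X, RatFunc.intDegree_neg, sq,
      RatFunc.intDegree_mul (div_ne_zero hx hy) (div_ne_zero hx hy)] at this
    omega
end

section
/- Let K be a formally real field. The affine curve y² = x³ − 4 over K(t) has only constant rational points: if x, y ∈ K(t) satisfy y² = x³ − 4, then x, y ∈ K̄ ∩ K(t); in particular if x, y are in K(t) then y ∈ K (the constants). -/
/-!
Write `x = p / q` and `y = r / s` in lowest terms with `q`, `s` monic. Clearing denominators in
`y² = x³ + a` and using coprimality gives `q³ = s²`, hence `q = c²`, `s = c³` and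
`r² = p³ + a c⁶` with `p` and `c` coprime. Mason–Stothers applied to `a c⁶ + p³ - r² = 0` would
give `6 deg c`, `3 deg p` and `2 deg r` all smaller than `deg c + deg p + deg r`, which is
impossible; so all three derivatives vanish, and in characteristic zero `p`, `r`, `c` are constant.
-/

open Polynomial UniqueFactorizationMonoid UniqueFactorizationDomain

theorem IsSumSq.exists_sum_fin_sq {R : Type*} [CommSemiring R] {s : R} (hs : IsSumSq s) :
    ∃ (n : ℕ) (f : Fin n → R), ∑ i, f i ^ 2 = s := by
  induction hs with
  | zero => exact ⟨0, Fin.elim0, by simp⟩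
  | sq_add a _ ih =>
    obtain ⟨n, f, rfl⟩ := ih
    exact ⟨n + 1, Fin.cons a f, by simp [Fin.sum_univ_succ, sq]⟩

theorem isSemireal_of_sum_sq_ne_neg_one {R : Type*} [CommRing R]
    (h : ∀ (n : ℕ) (f : Fin n → R), ∑ i, f i ^ 2 ≠ -1) : IsSemireal R :=
  isSemireal_iff_not_isSumSq_neg_one.mpr fun hs =>
    let ⟨n, f, hf⟩ := hs.exists_sum_fin_sq
    h n f hf

theorem exists_sq_cube_of_cube_eq_sq {R : Type*} [CommRing R] [IsDomain R]
    [IsIntegrallyClosed R] {q s : R} (hq : q ≠ 0) (h : q ^ 3 = s ^ 2) :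
    ∃ c, q = c ^ 2 ∧ s = c ^ 3 := by
  obtain ⟨c, rfl⟩ : q ∣ s :=
    (IsIntegrallyClosed.pow_dvd_pow_iff two_ne_zero).mp ⟨q, by rw [← h]; ring⟩
  have hc : q = c ^ 2 := mul_left_cancel₀ (pow_ne_zero 2 hq) (by linear_combination h)
  exact ⟨c, hc, by rw [hc]; ring⟩

theorem associated_cube_sq_of_sq_mul_cube_eq {R : Type*} [CommRing R] [IsDomain R]
    {p q r s : R} (b : R) (hpq : IsCoprime p q) (hrs : IsCoprime r s)
    (h : r ^ 2 * q ^ 3 = (p ^ 3 + b * q ^ 3) * s ^ 2) : Associated (q ^ 3) (s ^ 2) := by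
  have hq : IsCoprime (q ^ 3) (p ^ 3 + b * q ^ 3) := by
    simpa [mul_comm] using (hpq.pow (m := 3) (n := 3)).symm.add_mul_left_right b
  refine associated_of_dvd_dvd (hq.dvd_of_dvd_mul_left ⟨r ^ 2, by rw [← h]; ring⟩) ?_
  exact (hrs.pow (m := 2) (n := 2)).symm.dvd_of_dvd_mul_left
    ⟨p ^ 3 + b * q ^ 3, by rw [h, mul_comm]⟩

namespace Polynomial

variable {K : Type*} [Field K]

theorem natDegree_eq_zero_of_pow_eq_C_mul_pow {u c : K[X]} {m k : ℕ} {b : K} (hm : m ≠ 0)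
    (hc : c.natDegree = 0) (h : u ^ m = C b * c ^ k) : u.natDegree = 0 := by
  have : m * u.natDegree ≤ 0 := by
    rw [← natDegree_pow, h]
    exact (natDegree_C_mul_le _ _).trans (by rw [natDegree_pow, hc, mul_zero])
  exact (Nat.mul_eq_zero.mp (Nat.le_zero.mp this)).resolve_left hm

variable [DecidableEq K]

theorem natDegree_radical_mul_le (a b : K[X]) :
    (radical (a * b)).natDegree ≤ (radical a).natDegree + (radical b).natDegree :=
  (natDegree_le_of_dvd radical_mul_dvd (mul_ne_zero radical_ne_zero radical_ne_zero)).trans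
    (natDegree_mul radical_ne_zero radical_ne_zero).le

theorem natDegree_eq_zero_of_sq_eq_cube_add [CharZero K] {p r c : K[X]} {a : K} (ha : a ≠ 0)
    (hc : c ≠ 0) (hpc : IsCoprime p c) (h : r ^ 2 = p ^ 3 + C a * c ^ 6) :
    p.natDegree = 0 ∧ r.natDegree = 0 ∧ c.natDegree = 0 := by
  by_cases hp : p = 0
  · subst hp
    have hc0 : c.natDegree = 0 := natDegree_eq_zero_of_isUnit (isCoprime_zero_left.mp hpc)
    exact ⟨natDegree_zero,
      natDegree_eq_zero_of_pow_eq_C_mul_pow two_ne_zero hc0 (k := 6) (by linear_combination h), hc0⟩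
  by_cases hr : r = 0
  · subst hr
    have hc0 : c.natDegree = 0 := natDegree_eq_zero_of_isUnit <|
      (hpc.pow (m := 3) (n := 1)).isUnit_of_dvd' ⟨-(C a * c ^ 5), by linear_combination -h⟩
        (by simp)
    refine ⟨natDegree_eq_zero_of_pow_eq_C_mul_pow three_ne_zero hc0 (b := -a) (k := 6) ?_,
      natDegree_zero, hc0⟩
    rw [C_neg]
    linear_combination -h
  have hA : C a * c ^ 6 ≠ 0 := mul_ne_zero (C_ne_zero.mpr ha) (pow_ne_zero 6 hc)
  have hrad : (radical (C a * c ^ 6 * p ^ 3 * -r ^ 2)).natDegree ≤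
      c.natDegree + p.natDegree + r.natDegree := by
    calc _ ≤ (radical (C a * c ^ 6 * p ^ 3)).natDegree + (radical (-r ^ 2)).natDegree :=
          natDegree_radical_mul_le _ _
      _ ≤ (radical (C a * c ^ 6)).natDegree + (radical (p ^ 3)).natDegree +
            (radical (-r ^ 2)).natDegree := by gcongr; exact natDegree_radical_mul_le _ _
      _ = (radical c).natDegree + (radical p).natDegree + (radical r).natDegree := by
          rw [radical_mul_of_isUnit_left (isUnit_C.mpr ha.isUnit), radical_neg,
            radical_pow _ (by norm_num), radical_pow _ (by norm_num), radical_pow _ (by norm_num)]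
      _ ≤ _ := by gcongr <;> exact natDegree_radical_le
  rcases Polynomial.abc hA (pow_ne_zero 3 hp) (neg_ne_zero.mpr (pow_ne_zero 2 hr))
      ((isCoprime_mul_unit_left_left (isUnit_C.mpr ha.isUnit) _ _).mpr hpc.pow.symm)
      (by linear_combination -h) with ⟨h1, h2, h3⟩ | ⟨h1, h2, h3⟩
  · rw [natDegree_C_mul ha, natDegree_pow] at h1
    rw [natDegree_pow] at h2
    rw [natDegree_neg, natDegree_pow] at h3
    omega
  · simp only [derivative_eq_zero, natDegree_C_mul ha, natDegree_neg, natDegree_pow] at h1 h2 h3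
    omega

end Polynomial

namespace RatFunc

variable {K : Type*} [Field K]

theorem exists_eq_C_of_natDegree_eq_zero {x : RatFunc K} (hn : x.num.natDegree = 0)
    (hd : x.denom.natDegree = 0) : ∃ k, x = C k := by
  have hx := num_div_denom x
  rw [x.monic_denom.natDegree_eq_zero.mp hd, eq_C_of_natDegree_eq_zero hn, map_one, div_one,
    algebraMap_C] at hx
  exact ⟨_, hx.symm⟩

theorem sq_num_mul_cube_denom_eq {x y : RatFunc K} {a : K} (h : y ^ 2 = x ^ 3 + C a) :
    y.num ^ 2 * x.denom ^ 3 = (x.num ^ 3 + Polynomial.C a * x.denom ^ 3) * y.denom ^ 2 := by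
  apply algebraMap_injective K
  have hx := algebraMap_ne_zero (K := K) x.denom_ne_zero
  have hy := algebraMap_ne_zero (K := K) y.denom_ne_zero
  rw [← num_div_denom x, ← num_div_denom y] at h
  field_simp at h
  simp only [map_mul, map_pow, map_add, algebraMap_C]
  linear_combination h

theorem exists_eq_C_of_sq_eq_cube_add_C [CharZero K] {a : K} (ha : a ≠ 0) {x y : RatFunc K}
    (h : y ^ 2 = x ^ 3 + C a) : (∃ k, x = C k) ∧ ∃ k, y = C k := by
  classical
  have hclear := sq_num_mul_cube_denom_eq h
  have hq3 : x.denom ^ 3 = y.denom ^ 2 :=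
    eq_of_monic_of_associated (x.monic_denom.pow 3) (y.monic_denom.pow 2)
      (associated_cube_sq_of_sq_mul_cube_eq _ x.isCoprime_num_denom y.isCoprime_num_denom hclear)
  obtain ⟨c, hq, hs⟩ := exists_sq_cube_of_cube_eq_sq x.denom_ne_zero hq3
  have hc : c ≠ 0 := by
    rintro rfl
    exact x.denom_ne_zero (by rw [hq]; ring)
  have hpc : IsCoprime x.num c :=
    x.isCoprime_num_denom.of_isCoprime_of_dvd_right ⟨c, by rw [hq]; ring⟩
  have hmordell : y.num ^ 2 = x.num ^ 3 + Polynomial.C a * c ^ 6 := by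
    rw [← hq3, hq] at hclear
    exact mul_right_cancel₀ (pow_ne_zero 6 hc) (by linear_combination hclear)
  obtain ⟨hp0, hr0, hc0⟩ := natDegree_eq_zero_of_sq_eq_cube_add ha hc hpc hmordell
  exact ⟨exists_eq_C_of_natDegree_eq_zero hp0 (by rw [hq, natDegree_pow, hc0]),
    exists_eq_C_of_natDegree_eq_zero hr0 (by rw [hs, natDegree_pow, hc0])⟩

end RatFunc

/-- Over the rational function field `K(t)` of a formally real field `K`,
the genus-one curve `y² = x³ - 4` has only constant points: any solution
`x, y ∈ K(t)` consists of constants, in particular `y ∈ K`. -/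
theorem stmt10 (K : Type*) [Field K]
    (hfr : ∀ (n : ℕ) (f : Fin n → K), ∑ i, (f i) ^ 2 ≠ -1)
    (x y : RatFunc K) (h : y ^ 2 = x ^ 3 - 4) :
    (∃ cx : K, x = RatFunc.C cx) ∧ ∃ cy : K, y = RatFunc.C cy := by
  have : IsSemireal K := isSemireal_of_sum_sq_ne_neg_one hfr
  have : CharZero K := inferInstance
  refine RatFunc.exists_eq_C_of_sq_eq_cube_add_C (a := -4) (by norm_num) ?_
  rw [h, map_neg, map_ofNat, sub_eq_add_neg]
end

section
/- For every rational number z there exists a rational number y > z with y² equal to x³ − 4 for some rational x; i.e., the elliptic curve y² = x³ − 4 has rational points with y-coordinate unbounded above. -/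
instance fact3 : Fact (Nat.Prime 3) := ⟨by norm_num⟩

lemma n3 : ‖(3:ℚ_[3])‖ = (3:ℝ)⁻¹ := by
  simpa using Padic.norm_p (p := 3)

lemma nint (z : ℤ) (hz : ¬ (3:ℤ) ∣ z) : ‖((z:ℤ):ℚ_[3])‖ = 1 := by
  refine le_antisymm (Padic.norm_int_le_one z) ?_
  by_contra h
  push_neg at h
  rw [Padic.norm_intCast_lt_one_iff] at h
  exact hz (by exact_mod_cast h)

lemma n2 : ‖(2:ℚ_[3])‖ = 1 := by simpa using nint 2 (by norm_num)
lemma n4 : ‖(4:ℚ_[3])‖ = 1 := by simpa using nint 4 (by norm_num)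

lemma nadd_left {a b : ℚ_[3]} (h : ‖b‖ < ‖a‖) : ‖a + b‖ = ‖a‖ := by
  rw [Padic.add_eq_max_of_ne (ne_of_gt h)]
  exact max_eq_left h.le

lemma nsub_left {a b : ℚ_[3]} (h : ‖b‖ < ‖a‖) : ‖a - b‖ = ‖a‖ := by
  rw [sub_eq_add_neg, nadd_left (by rwa [norm_neg])]

lemma nsub_right {a b : ℚ_[3]} (h : ‖a‖ < ‖b‖) : ‖a - b‖ = ‖b‖ := by
  rw [← norm_neg, neg_sub, nsub_left h]

lemma norm_y (k : ℕ) (x y : ℚ) (h : y^2 = x^3 - 4)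
    (hx : ‖((x:ℚ):ℚ_[3])‖ = 9 * ((3:ℝ)^k)^2) :
    ‖((y:ℚ):ℚ_[3])‖ = 27 * ((3:ℝ)^k)^3 := by
  set t : ℝ := (3:ℝ)^k with htdef
  have ht1 : (1:ℝ) ≤ t := one_le_pow₀ (by norm_num)
  have hC : ((y:ℚ_[3]))^2 = (x:ℚ_[3])^3 - 4 := by
    exact_mod_cast congrArg (fun q : ℚ => (q : ℚ_[3])) h
  have hX3 : ‖((x:ℚ_[3]))^3‖ = 729*t^6 := by rw [norm_pow, hx]; ring
  have hsq : ‖(y:ℚ_[3])‖^2 = (27*t^3)^2 := by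
    rw [← norm_pow, hC, nsub_left (by rw [n4, hX3]; have h6 : (1:ℝ) ≤ t^6 := one_le_pow₀ ht1; nlinarith), hX3]
    ring
  exact (sq_eq_sq₀ (norm_nonneg _) (by positivity)).1 hsq

lemma y_nez (k : ℕ) (x y : ℚ) (h : y^2 = x^3 - 4)
    (hx : ‖((x:ℚ):ℚ_[3])‖ = 9 * ((3:ℝ)^k)^2) : y ≠ 0 := by
  intro h0
  have := norm_y k x y h hx
  rw [h0] at this
  simp only [Rat.cast_zero, norm_zero] at this
  have := pow_pos (pow_pos (by norm_num : (0:ℝ) < 3) k) 3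
  linarith

lemma tangent_id' (x1 y1 l : ℚ) (h1 : y1^2 = x1^3 - 4) (hl : l*(2*y1) = 3*x1^2) :
    (l*(x1-(l^2-2*x1)) - y1)^2 = (l^2-2*x1)^3 - 4 := by
  linear_combination h1 + ((l^2-2*x1) - x1) * hl

lemma chord_id (x1 y1 x2 y2 l : ℚ) (h1 : y1^2 = x1^3-4) (h2 : y2^2 = x2^3-4)
    (hl : l*(x2-x1) = y2-y1) (hne : x1 ≠ x2) :
    (l*(x1-(l^2-x1-x2)) - y1)^2 = (l^2-x1-x2)^3 - 4 := by
  have key : (x1-x2) * ((l*(x1-(l^2-x1-x2)) - y1)^2 - ((l^2-x1-x2)^3 - 4)) = 0 := by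
    linear_combination ((l^2-x1-x2)-x2) * h1 - ((l^2-x1-x2)-x1) * h2
      - ((l^2-x1-x2)-x1)*(y1+y2+l*(x2-x1)) * hl
  rcases mul_eq_zero.1 key with h | h
  · exact absurd (sub_eq_zero.1 h) hne
  · linarith [sub_eq_zero.1 h]

lemma key_step (k : ℕ) (x y : ℚ) (h : y^2 = x^3 - 4)
    (hx : ‖((x:ℚ):ℚ_[3])‖ = 9 * ((3:ℝ)^k)^2) :
    ∃ x' y' : ℚ, y'^2 = x'^3 - 4 ∧ ‖((x':ℚ):ℚ_[3])‖ = 9 * ((3:ℝ)^(k+1))^2 := by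
  set t : ℝ := (3:ℝ)^k with htdef
  have ht0 : (0:ℝ) < t := pow_pos (by norm_num) k
  have ht1 : (1:ℝ) ≤ t := one_le_pow₀ (by norm_num)
  have hY : ‖((y:ℚ):ℚ_[3])‖ = 27*t^3 := norm_y k x y h hx
  have hy0 : y ≠ 0 := y_nez k x y h hx
  -- doubling
  set l1 : ℚ := 3*x^2/(2*y) with hl1def
  set x2 : ℚ := l1^2 - 2*x with hx2def
  set y2 : ℚ := l1*(x - x2) - y with hy2def
  have hl1 : l1*(2*y) = 3*x^2 := by rw [hl1def]; field_simp
  have h2crv : y2^2 = x2^3 - 4 := by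
    rw [hy2def, hx2def]; exact tangent_id' x y l1 h hl1
  have hl1c : ((l1:ℚ):ℚ_[3]) = 3*(x:ℚ_[3])^2/(2*(y:ℚ_[3])) := by
    rw [hl1def]; push_cast; ring
  have hL1 : ‖((l1:ℚ):ℚ_[3])‖ = t := by
    rw [hl1c, norm_div, norm_mul, norm_mul, norm_pow, n3, n2, hx, hY]
    field_simp
    ring
  have hx2c : ((x2:ℚ):ℚ_[3]) = ((l1:ℚ):ℚ_[3])^2 - 2*(x:ℚ_[3]) := by
    rw [hx2def]; push_cast; ring
  have e2x : ‖2*(x:ℚ_[3])‖ = 9*t^2 := by rw [norm_mul, n2, hx]; ring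
  have eL1sq : ‖((l1:ℚ):ℚ_[3])^2‖ = t^2 := by rw [norm_pow, hL1]
  have hX2 : ‖((x2:ℚ):ℚ_[3])‖ = 9*t^2 := by
    rw [hx2c, nsub_right (by rw [eL1sq, e2x]; nlinarith), e2x]
  have hX2X : ‖((x2:ℚ):ℚ_[3]) - (x:ℚ_[3])‖ = 3*t^2 := by
    have e : ((x2:ℚ):ℚ_[3]) - (x:ℚ_[3]) = ((l1:ℚ):ℚ_[3])^2 - 3*(x:ℚ_[3]) := by
      rw [hx2c]; ring
    have e3x : ‖3*(x:ℚ_[3])‖ = 3*t^2 := by rw [norm_mul, n3, hx]; ring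
    rw [e, nsub_right (by rw [eL1sq, e3x]; nlinarith), e3x]
  have hx2nex : x2 ≠ x := by
    intro he
    rw [he, sub_self, norm_zero] at hX2X
    nlinarith
  have hy2c : ((y2:ℚ):ℚ_[3]) = ((l1:ℚ):ℚ_[3])*((x:ℚ_[3]) - (x2:ℚ_[3])) - (y:ℚ_[3]) := by
    rw [hy2def]; push_cast; ring
  have hXX2 : ‖(x:ℚ_[3]) - ((x2:ℚ):ℚ_[3])‖ = 3*t^2 := by
    rw [← norm_neg, neg_sub]; exact hX2X
  have hY2Y : ‖((y2:ℚ):ℚ_[3]) - (y:ℚ_[3])‖ = 27*t^3 := by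
    have e : ((y2:ℚ):ℚ_[3]) - (y:ℚ_[3])
        = ((l1:ℚ):ℚ_[3])*((x:ℚ_[3]) - (x2:ℚ_[3])) - 2*(y:ℚ_[3]) := by
      rw [hy2c]; ring
    have ea : ‖((l1:ℚ):ℚ_[3])*((x:ℚ_[3]) - (x2:ℚ_[3]))‖ = 3*t^3 := by
      rw [norm_mul, hL1, hXX2]; ring
    have eb : ‖2*(y:ℚ_[3])‖ = 27*t^3 := by rw [norm_mul, n2, hY]; ring
    rw [e, nsub_right (by rw [ea, eb]; nlinarith), eb]
  -- chord from (x,y) to (x2,y2)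
  set l2 : ℚ := (y2 - y)/(x2 - x) with hl2def
  set x3 : ℚ := l2^2 - x - x2 with hx3def
  set y3 : ℚ := l2*(x - x3) - y with hy3def
  have hl2 : l2*(x2 - x) = y2 - y := by
    rw [hl2def]; field_simp [sub_ne_zero.2 hx2nex]
  have h3crv : y3^2 = x3^3 - 4 := by
    rw [hy3def, hx3def]
    exact chord_id x y x2 y2 l2 h h2crv hl2 (Ne.symm hx2nex)
  have hl2c : ((l2:ℚ):ℚ_[3])
      = (((y2:ℚ):ℚ_[3]) - (y:ℚ_[3]))/(((x2:ℚ):ℚ_[3]) - (x:ℚ_[3])) := by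
    rw [hl2def]; push_cast; ring
  have hL2 : ‖((l2:ℚ):ℚ_[3])‖ = 9*t := by
    rw [hl2c, norm_div, hY2Y, hX2X]
    rw [div_eq_iff (by positivity)]; ring
  have hx3c : ((x3:ℚ):ℚ_[3]) = ((l2:ℚ):ℚ_[3])^2 - ((x:ℚ_[3]) + ((x2:ℚ):ℚ_[3])) := by
    rw [hx3def]; push_cast; ring
  have hX3 : ‖((x3:ℚ):ℚ_[3])‖ = 81*t^2 := by
    have eL2sq : ‖((l2:ℚ):ℚ_[3])^2‖ = 81*t^2 := by rw [norm_pow, hL2]; ring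
    have hb : ‖(x:ℚ_[3]) + ((x2:ℚ):ℚ_[3])‖ < 81*t^2 := by
      refine lt_of_le_of_lt (Padic.nonarchimedean _ _) ?_
      rw [hx, hX2, max_self]; nlinarith
    rw [hx3c, nsub_left (by rw [eL2sq]; exact hb), eL2sq]
  refine ⟨x3, y3, h3crv, ?_⟩
  rw [hX3, pow_succ]
  ring

lemma base_norm : ‖((106/9 : ℚ) : ℚ_[3])‖ = 9 := by
  push_cast
  rw [norm_div]
  have h106 : ‖(106:ℚ_[3])‖ = 1 := by simpa using nint 106 (by norm_num)
  have h9 : ‖(9:ℚ_[3])‖ = (9:ℝ)⁻¹ := by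
    have e : (9:ℚ_[3]) = 3^2 := by norm_num
    rw [e, norm_pow, n3]; norm_num
  rw [h106, h9]; norm_num

lemma exists_pt (k : ℕ) : ∃ x y : ℚ, y^2 = x^3 - 4 ∧ ‖((x:ℚ):ℚ_[3])‖ = 9*((3:ℝ)^k)^2 := by
  induction k with
  | zero =>
    refine ⟨106/9, 1090/27, by norm_num, ?_⟩
    rw [base_norm]; norm_num
  | succ n ih =>
    obtain ⟨x, y, h, hx⟩ := ih
    exact key_step n x y h hx

lemma exists_family : ∃ f g : ℕ → ℚ, (∀ k, (g k)^2 = (f k)^3 - 4) ∧ (∀ k, g k ≠ 0)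
    ∧ Function.Injective f := by
  choose f g hcrv hnorm using exists_pt
  refine ⟨f, g, hcrv, fun k => y_nez k (f k) (g k) (hcrv k) (hnorm k), ?_⟩
  intro i j hij
  by_contra hne
  have h1 := hnorm i
  have h2 := hnorm j
  rw [hij, h2] at h1
  have : (3:ℝ)^j = (3:ℝ)^i := by
    have hpi : (0:ℝ) < 3^i := pow_pos (by norm_num) i
    have hpj : (0:ℝ) < 3^j := pow_pos (by norm_num) j
    nlinarith
  rcases lt_trichotomy i j with hlt | heq | hlt
  · have := pow_lt_pow_right₀ (by norm_num : (1:ℝ) < 3) hlt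
    linarith
  · exact hne heq
  · have := pow_lt_pow_right₀ (by norm_num : (1:ℝ) < 3) hlt
    linarith

lemma one_lt_x {x y : ℚ} (h : y^2 = x^3-4) : 1 < x := by
  nlinarith [sq_nonneg y, sq_nonneg (2*x+1), sq_nonneg (x-1), sq_nonneg (x+1)]

lemma caseA (M x y : ℚ) (hM : 4 ≤ M) (h : y^2 = x^3-4) (hy0 : y ≠ 0)
    (hx1 : 1 < x) (hxM : x ≤ M) (hsm : y^2 ≤ 1/(2*M)) :
    ∃ x' y' : ℚ, y'^2 = x'^3 - 4 ∧ M < x' := by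
  have hM0 : (0:ℚ) < M := by linarith
  set l : ℚ := 3*x^2/(2*y) with hldef
  have hl : l*(2*y) = 3*x^2 := by rw [hldef]; field_simp
  refine ⟨l^2-2*x, l*(x-(l^2-2*x)) - y, tangent_id' x y l h hl, ?_⟩
  have hy2pos : 0 < y^2 := lt_of_le_of_ne (sq_nonneg y) (Ne.symm (pow_ne_zero 2 hy0))
  have hl2 : l^2*(4*y^2) = 9*x^4 := by
    rw [hldef]; field_simp; ring
  have hx4 : 1 ≤ x^4 := by nlinarith
  have hsm' : y^2*(2*M) ≤ 1 := by
    rw [le_div_iff₀ (by linarith : (0:ℚ) < 2*M)] at hsm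
    linarith
  have e1 : l^2*(y^2*(2*M)) ≤ l^2 := by
    nlinarith [sq_nonneg l]
  have e2 : l^2*(y^2*(2*M))*2 = 9*x^4*M := by
    linear_combination M*hl2
  nlinarith

lemma caseB (M x1 y1 x2 y2 : ℚ) (hM : 4 ≤ M)
    (h1 : y1^2 = x1^3-4) (h2 : y2^2 = x2^3-4)
    (hy1 : 0 < y1) (hy2 : 0 < y2)
    (hne : x1 ≠ x2)
    (hd1 : 1/(2*M) < y1^2)
    (hclose : (x1-x2)^2 * (9*M^2) < 1)
    (hx1M : x1 ≤ M) (hx2M : x2 ≤ M) :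
    ∃ x' y' : ℚ, y'^2 = x'^3-4 ∧ M < x' := by
  have hM0 : (0:ℚ) < M := by linarith
  set l : ℚ := ((-y2) - y1)/(x2 - x1) with hldef
  have hsub : x2 - x1 ≠ 0 := sub_ne_zero.2 (Ne.symm hne)
  have hl : l*(x2-x1) = (-y2) - y1 := by rw [hldef]; field_simp
  have h2' : (-y2)^2 = x2^3-4 := by rw [neg_pow]; simpa using h2
  refine ⟨l^2-x1-x2, l*(x1-(l^2-x1-x2)) - y1,
    chord_id x1 y1 x2 (-y2) l h1 h2' hl hne, ?_⟩
  have hl2 : l^2*((x1-x2)^2) = (y1+y2)^2 := by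
    rw [hldef]; field_simp; ring
  have hd1' : 1 < y1^2*(2*M) := by
    rw [div_lt_iff₀ (by linarith : (0:ℚ) < 2*M)] at hd1
    linarith
  have e1 : l^2*((x1-x2)^2*(9*M^2)) ≤ l^2 := by
    nlinarith [sq_nonneg l]
  have e2 : l^2*((x1-x2)^2*(9*M^2)) = (y1+y2)^2*(9*M^2) := by
    linear_combination 9*M^2*hl2
  have e3 : y1^2*(9*M^2) ≤ (y1+y2)^2*(9*M^2) := by
    nlinarith [mul_nonneg (mul_pos hy1 hy2).le (sq_nonneg M),
      mul_nonneg (sq_nonneg y2) (sq_nonneg M)]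
  have e4 : (9/2)*M < y1^2*(9*M^2) := by
    nlinarith [mul_lt_mul_of_pos_left hd1' (by linarith : (0:ℚ) < (9/2)*M)]
  linarith

lemma exists_pt_gt (M : ℚ) (hM : 4 ≤ M) : ∃ x y : ℚ, y^2 = x^3-4 ∧ M < x := by
  have hM0 : (0:ℚ) < M := by linarith
  obtain ⟨f, g, hcrv, hg0, hinj⟩ := exists_family
  by_cases hbig : ∃ k, M < f k
  · obtain ⟨k, hk⟩ := hbig
    exact ⟨f k, g k, hcrv k, hk⟩
  push_neg at hbig
  by_cases hsmall : ∃ k, (g k)^2 ≤ 1/(2*M)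
  · obtain ⟨k, hk⟩ := hsmall
    exact caseA M (f k) (g k) hM (hcrv k) (hg0 k) (one_lt_x (hcrv k)) (hbig k) hk
  push_neg at hsmall
  set B : ℕ := (⌊(M-1)*(3*M)⌋).toNat with hBdef
  have hBfl : (⌊(M-1)*(3*M)⌋ : ℤ) = (B:ℤ) := by
    rw [hBdef, Int.toNat_of_nonneg]
    apply Int.floor_nonneg.2
    nlinarith
  have hmaps : ∀ k ∈ Finset.range (B+2),
      (⌊(f k - 1)*(3*M)⌋) ∈ Finset.Icc (0:ℤ) (B:ℤ) := by
    intro k _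
    refine Finset.mem_Icc.2 ⟨Int.floor_nonneg.2 ?_, ?_⟩
    · have := one_lt_x (hcrv k)
      nlinarith
    · rw [← hBfl]
      apply Int.floor_le_floor
      have h1k := one_lt_x (hcrv k)
      have h2k := hbig k
      nlinarith
  have hcard : (Finset.Icc (0:ℤ) (B:ℤ)).card < (Finset.range (B+2)).card := by
    rw [Int.card_Icc, Finset.card_range]
    simp
  obtain ⟨i, hi, j, hj, hij, heq⟩ :=
    Finset.exists_ne_map_eq_of_card_lt_of_maps_to hcard hmaps
  have hfl := Int.abs_sub_lt_one_of_floor_eq_floor heq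
  have e : (f i - 1)*(3*M) - (f j - 1)*(3*M) = (f i - f j)*(3*M) := by ring
  rw [e] at hfl
  have h9 : (f i - f j)^2*(9*M^2) < 1 := by
    have habs : |(f i - f j)*(3*M)| < 1 := hfl
    nlinarith [abs_nonneg ((f i - f j)*(3*M)), sq_abs ((f i - f j)*(3*M))]
  refine caseB M (f i) |g i| (f j) |g j| hM ?_ ?_ ?_ ?_ ?_ ?_ ?_ ?_ ?_
  · rw [sq_abs]; exact hcrv i
  · rw [sq_abs]; exact hcrv j
  · exact abs_pos.2 (hg0 i)
  · exact abs_pos.2 (hg0 j)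
  · exact fun h => hij (hinj h)
  · rw [sq_abs]; exact hsmall i
  · exact h9
  · exact hbig i
  · exact hbig j

/-- For every rational number `z` there is a rational `y > z` which is the
`y`-coordinate of a rational point on the elliptic curve `y² = x³ - 4`. -/
theorem stmt11 (z : ℚ) : ∃ y : ℚ, z < y ∧ ∃ x : ℚ, y ^ 2 = x ^ 3 - 4 := by
  obtain ⟨x, y, hxy, hMx⟩ := exists_pt_gt (z^2+4) (by nlinarith [sq_nonneg z])
  refine ⟨|y|, ?_, x, by rw [sq_abs]; exact hxy⟩
  have hx1 : (1:ℚ) < x := one_lt_x hxy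
  have hy2 : z^2 < |y|^2 := by
    rw [sq_abs, hxy]
    nlinarith [mul_pos (mul_pos (show (0:ℚ) < x by linarith)
      (show (0:ℚ) < x - 1 by linarith)) (show (0:ℚ) < x + 1 by linarith)]
  nlinarith [abs_nonneg y, hy2]
end

section
/- Let Z ∈ Q(t) with ord_{t⁻¹}(Z) > 0. Then there exists a rational number y > 0 such that the rational function (y − t)·Z² + 1 takes strictly positive values at every real number r, i.e., is positive definite on R. -/
/-!
Write `Z = p / q` in lowest terms, so `deg p < deg q`. Then
`(y - t) Z² + 1 = ((y - t) p² + q²) / q²`, so it is enough that `(y - t) p² + q²` is positive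
on `ℝ`. At `r < y` this holds because `p` and `q` have no common root. At `r ≥ y` it holds once
`y > 0` lies beyond the last real root of `q² - t p²`, a polynomial of positive degree with
positive leading coefficient: then `(y - r) p² + q² = y p² + (q² - r p²) > 0`.
-/

open Polynomial Filter

namespace Polynomial

variable {𝕜 : Type*} [NormedField 𝕜] [LinearOrder 𝕜] [IsStrictOrderedRing 𝕜] [OrderTopology 𝕜]

theorem eventually_pos_sq_sub_X_mul_sq {P Q : 𝕜[X]} (h : P.natDegree < Q.natDegree) :
    ∀ᶠ r in atTop, 0 < Q.eval r ^ 2 - r * P.eval r ^ 2 := by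
  have hlt : (X * P ^ 2).degree < (Q ^ 2).degree := by
    refine degree_lt_degree (natDegree_mul_le.trans_lt ?_)
    rw [natDegree_pow, natDegree_pow]
    have := natDegree_X_le (R := 𝕜)
    omega
  have hdeg : 0 < (Q ^ 2 - X * P ^ 2).degree := by
    rw [degree_sub_eq_left_of_degree_lt hlt, ← natDegree_pos_iff_degree_pos, natDegree_pow]
    omega
  have hlead : 0 ≤ (Q ^ 2 - X * P ^ 2).leadingCoeff := by
    rw [leadingCoeff_sub_of_degree_lt hlt, leadingCoeff_pow]
    positivity
  filter_upwards [(tendsto_atTop_of_leadingCoeff_nonneg _ hdeg hlead).eventually_gt_atTop 0]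
    with r hr
  simpa using hr

theorem eventually_forall_pos_sub_mul_sq_add_sq {P Q : 𝕜[X]} (hPQ : IsCoprime P Q)
    (h : P.natDegree < Q.natDegree) :
    ∀ᶠ y in atTop, ∀ r, 0 < (y - r) * P.eval r ^ 2 + Q.eval r ^ 2 := by
  obtain ⟨b, hb⟩ := (eventually_pos_sq_sub_X_mul_sq h).exists_forall_of_atTop
  filter_upwards [eventually_ge_atTop b, eventually_ge_atTop 0] with y hby hy r
  rcases lt_or_ge r y with hry | hyr
  · rcases aeval_ne_zero_of_isCoprime hPQ r with hP | hQ
    · rw [coe_aeval_eq_eval] at hP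
      exact add_pos_of_pos_of_nonneg (mul_pos (sub_pos.2 hry) (by positivity)) (sq_nonneg _)
    · rw [coe_aeval_eq_eval] at hQ
      exact add_pos_of_nonneg_of_pos (mul_nonneg (sub_pos.2 hry).le (sq_nonneg _)) (by positivity)
  · linarith [hb r (hby.trans hyr), mul_nonneg hy (sq_nonneg (P.eval r))]

end Polynomial

namespace RatFunc

universe u

variable {K L : Type u} [Field K] [Field L] [LinearOrder L] [IsStrictOrderedRing L]

theorem eval_pos_of_eq_div {f : K →+* L} {r : L} {x : RatFunc K} {p q : K[X]} (hq : q ≠ 0)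
    (hx : x = algebraMap _ _ p / algebraMap _ _ q) (hden : x.denom.eval₂ f r ≠ 0)
    (hp : 0 < p.eval₂ f r) (hq' : 0 ≤ q.eval₂ f r) : 0 < x.eval f r := by
  have key := congrArg (eval₂ f r) ((num_mul_eq_mul_denom_iff hq).2 hx)
  rw [eval₂_mul, eval₂_mul] at key
  have hqr : q.eval₂ f r ≠ 0 := by
    rintro hqr
    rw [hqr, mul_zero] at key
    exact mul_ne_zero hp.ne' hden key.symm
  rw [eval, (div_eq_div_iff hden hqr).2 key]
  exact div_pos hp (hq'.lt_of_ne' hqr)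

theorem algebraMap_mul_sq_add_one (g : K[X]) (x : RatFunc K) :
    algebraMap K[X] (RatFunc K) g * x ^ 2 + 1 =
      algebraMap K[X] (RatFunc K) (g * x.num ^ 2 + x.denom ^ 2) /
        algebraMap K[X] (RatFunc K) (x.denom ^ 2) := by
  have hden : algebraMap K[X] (RatFunc K) x.denom ≠ 0 := algebraMap_ne_zero x.denom_ne_zero
  conv_lhs => rw [← num_div_denom x]
  field_simp
  simp only [map_add, map_mul, map_pow]
  ring

end RatFunc

/-- If `Z ∈ ℚ(t)` has `ord_{t⁻¹}(Z) > 0` (i.e. `Z = 0` or `Z` has negative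
degree), then there is a positive rational `y` such that the rational function
`(y - t)·Z² + 1` takes strictly positive values at every real number at which
it is defined. -/
theorem stmt13 (Z : RatFunc ℚ) (hZ : Z = 0 ∨ Z.intDegree < 0) :
    ∃ y : ℚ, 0 < y ∧
      ∀ r : ℝ,
        Polynomial.eval r
            (Polynomial.map (algebraMap ℚ ℝ)
              ((RatFunc.C y - RatFunc.X) * Z ^ 2 + 1).denom) ≠ 0 →
        0 < RatFunc.eval (algebraMap ℚ ℝ) r
            ((RatFunc.C y - RatFunc.X) * Z ^ 2 + 1) := by
  rcases hZ with rfl | hdeg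
  · exact ⟨1, one_pos, fun r _ => by simp⟩
  have hnd :
      (Z.num.map (algebraMap ℚ ℝ)).natDegree < (Z.denom.map (algebraMap ℚ ℝ)).natDegree := by
    rw [RatFunc.intDegree] at hdeg
    simp only [natDegree_map]
    omega
  obtain ⟨b, hb⟩ := (eventually_forall_pos_sub_mul_sq_add_sq
    ((RatFunc.isCoprime_num_denom Z).map (mapRingHom (algebraMap ℚ ℝ))) hnd).exists_forall_of_atTop
  obtain ⟨y, hy⟩ := exists_rat_gt (max b 0)
  refine ⟨y, by exact_mod_cast (le_max_right b 0).trans_lt hy, fun r hden => ?_⟩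
  have hCX : (RatFunc.C y - RatFunc.X : RatFunc ℚ) = algebraMap _ _ (C y - X) := by simp
  rw [eval_map] at hden
  rw [hCX, RatFunc.algebraMap_mul_sq_add_one] at hden ⊢
  refine RatFunc.eval_pos_of_eq_div (pow_ne_zero 2 Z.denom_ne_zero) rfl hden ?_
    (by rw [eval₂_pow]; positivity)
  simpa [← eval_map] using hb y ((le_max_left b 0).trans hy.le) r
end
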